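/- (Claim 1 in the stability proof.) Let Z and Z' be finite nonempty subsets of metric spaces, let γ ≥ 0, and suppose there exists a correspondence R between Z and Z' with distortion dis(R) ≤ 2γ. Then for every ε ≥ 0, β₀^{ε}(Z) ≥ β₀^{ε+2γ}(Z'), i.e., the number of connected components of the ε-neighborhood graph on Z is at least the number of connected components of the (ε+2γ)-neighborhood graph on Z'. -/

import Mathlib

/-- The ε-neighborhood graph on a finite subset `Z` of a metric space (the
1-skeleton of the Vietoris-Rips complex of `Z` at radius `ε`): edges join
distinct points at distance at most `ε`. -/
def nbhdGraph {X : Type*} [MetricSpace X] (Z : Finset X) (ε : ℝ) :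
    SimpleGraph {x // x ∈ Z} where
  Adj a b := a ≠ b ∧ dist a b ≤ ε
  symm := by
    constructor
    intro a b h
    exact ⟨h.1.symm, by rw [dist_comm]; exact h.2⟩
  loopless := by
    constructor
    intro a h
    exact h.1 rfl

/-- The 0-th Betti number of `Z` at radius `ε`: the number of connected
components of the ε-neighborhood graph. -/
noncomputable def betti0 {X : Type*} [MetricSpace X] (Z : Finset X) (ε : ℝ) : ℕ :=
  Nat.card (nbhdGraph Z ε).ConnectedComponent

/-- `R` is a correspondence between `Z` and `Z'`: a relation contained in
`Z × Z'` such that every point of `Z` is related to some point of `Z'` and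
vice versa. -/
def IsCorrespondence {X Y : Type*} [MetricSpace X] [MetricSpace Y]
    (Z : Finset X) (Z' : Finset Y) (R : Set (X × Y)) : Prop :=
  (∀ p ∈ R, p.1 ∈ Z ∧ p.2 ∈ Z') ∧
  (∀ z ∈ Z, ∃ z' ∈ Z', (z, z') ∈ R) ∧
  (∀ z' ∈ Z', ∃ z ∈ Z, (z, z') ∈ R)

/-- The distortion of a relation `R`:
`dis(R) = sup {|dist z₁ z₂ - dist z₁' z₂'| : (z₁, z₁') ∈ R, (z₂, z₂') ∈ R}`. -/
noncomputable def distortion {X Y : Type*} [MetricSpace X] [MetricSpace Y]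
    (R : Set (X × Y)) : ℝ :=
  sSup {c : ℝ | ∃ p ∈ R, ∃ q ∈ R, c = |dist p.1 q.1 - dist p.2 q.2|}

/-!
Pick for every `z ∈ Z` a partner `f z ∈ Z'` under the correspondence. Since the distortion is at
most `2γ`, points at distance `≤ ε` are sent to points at distance `≤ ε + 2γ`, so `f` maps
connected components of `G_ε(Z)` into connected components of `G_{ε+2γ}(Z')`. Every `z' ∈ Z'` has
a partner `z`, and `f z` is within `2γ` of `z'`, so the induced map on components is surjective.
-/

namespace SimpleGraph

variable {V W : Type*} {G : SimpleGraph V} {G' : SimpleGraph W}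

theorem Reachable.map_of_adj {f : V → W} (hf : ∀ a b, G.Adj a b → G'.Reachable (f a) (f b))
    {a b : V} (hab : G.Reachable a b) : G'.Reachable (f a) (f b) := by
  rw [reachable_iff_reflTransGen] at hab ⊢
  exact Relation.ReflTransGen.lift' f (fun a b h => (reachable_iff_reflTransGen _ _).1 (hf a b h))
    a b hab

theorem card_connectedComponent_le_of_reachable [Finite G.ConnectedComponent] (f : V → W)
    (hadj : ∀ a b, G.Adj a b → G'.Reachable (f a) (f b)) (hsurj : ∀ w, ∃ v, G'.Reachable (f v) w) :
    Nat.card G'.ConnectedComponent ≤ Nat.card G.ConnectedComponent := by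
  let F : G.ConnectedComponent → G'.ConnectedComponent :=
    ConnectedComponent.lift (fun v => G'.connectedComponentMk (f v))
      fun _ _ p _ => ConnectedComponent.sound (p.reachable.map_of_adj hadj)
  refine Nat.card_le_card_of_surjective F fun c => ?_
  obtain ⟨w, rfl⟩ := c.exists_rep
  obtain ⟨v, hv⟩ := hsurj w
  exact ⟨G.connectedComponentMk v, ConnectedComponent.sound hv⟩

end SimpleGraph

section Distortion

variable {X Y : Type*} [MetricSpace X] [MetricSpace Y]

theorem nbhdGraph_reachable_of_dist_le {Z : Finset X} {ε : ℝ} {a b : {x // x ∈ Z}}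
    (h : dist a b ≤ ε) : (nbhdGraph Z ε).Reachable a b := by
  by_cases hab : a = b
  · exact hab ▸ SimpleGraph.Reachable.refl a
  · exact SimpleGraph.Adj.reachable ⟨hab, h⟩

theorem IsCorrespondence.finite {Z : Finset X} {Z' : Finset Y} {R : Set (X × Y)}
    (hR : IsCorrespondence Z Z' R) : R.Finite :=
  ((Z : Set X).toFinite.prod (Z' : Set Y).toFinite).subset fun p hp => hR.1 p hp

theorem abs_dist_sub_dist_le_distortion {R : Set (X × Y)} (hR : R.Finite) {p q : X × Y}
    (hp : p ∈ R) (hq : q ∈ R) : |dist p.1 q.1 - dist p.2 q.2| ≤ distortion R := by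
  have hfin : {c : ℝ | ∃ p ∈ R, ∃ q ∈ R, c = |dist p.1 q.1 - dist p.2 q.2|}.Finite := by
    refine ((hR.prod hR).image fun pq => |dist pq.1.1 pq.2.1 - dist pq.1.2 pq.2.2|).subset ?_
    rintro c ⟨p, hp, q, hq, rfl⟩
    exact ⟨(p, q), ⟨hp, hq⟩, rfl⟩
  exact le_csSup hfin.bddAbove ⟨p, hp, q, hq, rfl⟩

theorem dist_le_dist_add_distortion {R : Set (X × Y)} (hR : R.Finite) {p q : X × Y}
    (hp : p ∈ R) (hq : q ∈ R) : dist p.2 q.2 ≤ dist p.1 q.1 + distortion R := by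
  linarith [(abs_le.1 (abs_dist_sub_dist_le_distortion hR hp hq)).1]

end Distortion

theorem betti0_claim_one_general {X Y : Type*} [MetricSpace X] [MetricSpace Y]
    (Z : Finset X) (Z' : Finset Y)
    (γ : ℝ)
    (hcor : ∃ R : Set (X × Y), IsCorrespondence Z Z' R ∧ distortion R ≤ 2 * γ) :
    ∀ ε : ℝ, 0 ≤ ε → betti0 Z' (ε + 2 * γ) ≤ betti0 Z ε := by
  intro ε hε
  obtain ⟨R, hR, hdis⟩ := hcor
  have hdist {p q : X × Y} (hp : p ∈ R) (hq : q ∈ R) : dist p.2 q.2 ≤ dist p.1 q.1 + 2 * γ :=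
    (dist_le_dist_add_distortion hR.finite hp hq).trans (by linarith)
  choose f hfZ' hfR using fun z : {x // x ∈ Z} => hR.2.1 z z.2
  refine SimpleGraph.card_connectedComponent_le_of_reachable (fun z => ⟨f z, hfZ' z⟩)
    (fun a b hab => nbhdGraph_reachable_of_dist_le ?_) fun w => ?_
  · exact (hdist (hfR a) (hfR b)).trans (add_le_add_left hab.2 _)
  · obtain ⟨z, hz, hzw⟩ := hR.2.2 w w.2
    refine ⟨⟨z, hz⟩, nbhdGraph_reachable_of_dist_le ?_⟩
    calc dist (f ⟨z, hz⟩) (w : Y) ≤ dist z z + 2 * γ := hdist (hfR ⟨z, hz⟩) hzw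
      _ ≤ ε + 2 * γ := by rw [dist_self]; linarith

/-- Claim 1 in the stability proof: if there is a correspondence between `Z`
and `Z'` of distortion at most `2γ`, then `β₀^ε(Z) ≥ β₀^{ε+2γ}(Z')` for every
`ε ≥ 0`. -/
theorem betti0_claim_one {X Y : Type*} [MetricSpace X] [MetricSpace Y]
    (Z : Finset X) (Z' : Finset Y) (hZ : Z.Nonempty) (hZ' : Z'.Nonempty)
    (γ : ℝ) (hγ : 0 ≤ γ)
    (hcor : ∃ R : Set (X × Y), IsCorrespondence Z Z' R ∧ distortion R ≤ 2 * γ) :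
    ∀ ε : ℝ, 0 ≤ ε → betti0 Z' (ε + 2 * γ) ≤ betti0 Z ε :=
  betti0_claim_one_general Z Z' γ hcor
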